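/- Fix a real wave number k ≠ 0. For each ε > 0, let λ₁(ε), λ₂(ε) be the pair of non-real complex-conjugate roots of P_k(λ) = −λ³ − (1/ε)λ² − 3k²λ − (5/3)k²/ε, and define B(k²,ε) = −4ε² / (3 + 3ε(λ₁+λ₂) + ε²(3λ₁λ₂ − 4k²)). Then lim_{ε→0⁺} B(k²,ε)/ε² = −4/3; in particular the slow-manifold stress closure satisfies −k² B p̂ = (4/3)ε²k² p̂ + O(ε³). -/

import Mathlib

/-- The characteristic polynomial `P_k(λ)` of the Grad generator. -/
noncomputable def gradP (ε k : ℝ) (l : ℂ) : ℂ :=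
  -l^3 - (1/ε) * l^2 - 3 * k^2 * l - (5/3) * k^2 / ε

/-- The slow-manifold closure coefficient `B(k²,ε)` built from the two acoustic roots. -/
noncomputable def gradB (ε k : ℝ) (l₁ l₂ : ℂ) : ℂ :=
  -4 * ε^2 /
    (3 + 3 * ε * (l₁ + l₂) + ε^2 * (3 * l₁ * l₂ - 4 * k^2))

theorem grad_B_over_eps_sq_tendsto (k : ℝ) (hk : k ≠ 0) (l₁ l₂ : ℝ → ℂ)
    (hroot₁ : ∀ ε : ℝ, 0 < ε → gradP ε k (l₁ ε) = 0)
    (hroot₂ : ∀ ε : ℝ, 0 < ε → gradP ε k (l₂ ε) = 0)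
    (hnonreal : ∀ ε : ℝ, 0 < ε → (l₁ ε).im ≠ 0)
    (hconj : ∀ ε : ℝ, 0 < ε → l₂ ε = starRingEnd ℂ (l₁ ε)) :
    Filter.Tendsto (fun ε : ℝ => gradB ε k (l₁ ε) (l₂ ε) / (ε : ℂ)^2)
      (nhdsWithin 0 (Set.Ioi 0)) (nhds (-4/3 : ℂ)) := by
  -- The real quantity t = ε (λ₁ + λ₂) = 2 ε Re λ₁
  set T : ℝ → ℝ := fun ε => 2 * ε * (l₁ ε).re with hTdef
  have hk2 : (0:ℝ) < k^2 := by positivity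
  -- Main pointwise facts for ε > 0
  have main : ∀ ε : ℝ, 0 < ε →
      ((T ε : ℂ) = ε * (l₁ ε + l₂ ε)) ∧
      ((T ε)^3 + 2*(T ε)^2 + (T ε) + 3*k^2*ε^2*(T ε) + (4/3)*k^2*ε^2 = 0) := by
    intro ε hε
    have hεC : (ε : ℂ) ≠ 0 := by exact_mod_cast hε.ne'
    have hts : (T ε : ℂ) = ε * (l₁ ε + l₂ ε) := by
      rw [hconj ε hε]
      rw [Complex.add_conj]
      push_cast [hTdef]
      ring
    have E1 : (ε:ℂ) * (l₁ ε)^3 + (l₁ ε)^2 + 3*k^2*ε*(l₁ ε) + (5/3)*k^2 = 0 := by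
      have h := hroot₁ ε hε
      unfold gradP at h
      field_simp at h
      have h3 : (3*(ε:ℂ)) * ((ε:ℂ) * (l₁ ε)^3 + (l₁ ε)^2 + 3*k^2*ε*(l₁ ε) + (5/3)*k^2) = 0 := by
        linear_combination (-(ε:ℂ)) * h
      exact (mul_eq_zero.mp h3).resolve_left (by simpa using hεC)
    have E2 : (ε:ℂ) * (l₂ ε)^3 + (l₂ ε)^2 + 3*k^2*ε*(l₂ ε) + (5/3)*k^2 = 0 := by
      have h := hroot₂ ε hε
      unfold gradP at h
      field_simp at h
      have h3 : (3*(ε:ℂ)) * ((ε:ℂ) * (l₂ ε)^3 + (l₂ ε)^2 + 3*k^2*ε*(l₂ ε) + (5/3)*k^2) = 0 := by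
        linear_combination (-(ε:ℂ)) * h
      exact (mul_eq_zero.mp h3).resolve_left (by simpa using hεC)
    have hd : l₁ ε - l₂ ε ≠ 0 := by
      rw [hconj ε hε]
      intro h
      apply hnonreal ε hε
      have him : (l₁ ε - starRingEnd ℂ (l₁ ε)).im = 0 := by rw [h]; simp
      simpa [Complex.sub_im, Complex.conj_im] using him
    have hQ : (ε:ℂ) * ((l₁ ε)^2 + (l₁ ε)*(l₂ ε) + (l₂ ε)^2) + (l₁ ε + l₂ ε) + 3*k^2*ε = 0 := by
      have hfac : (l₁ ε - l₂ ε) *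
          ((ε:ℂ) * ((l₁ ε)^2 + (l₁ ε)*(l₂ ε) + (l₂ ε)^2) + (l₁ ε + l₂ ε) + 3*k^2*ε) = 0 := by
        linear_combination E1 - E2
      rcases mul_eq_zero.mp hfac with h | h
      · exact absurd h hd
      · exact h
    have keyC : ((T ε : ℂ))^3 + 2*((T ε : ℂ))^2 + (T ε : ℂ) + 3*k^2*ε^2*(T ε : ℂ)
        + (4/3)*k^2*ε^2 = 0 := by
      rw [hts]
      linear_combination (-(ε:ℂ)^2/2) * E1 + (-(ε:ℂ)^2/2) * E2
        + ((3/2)*(ε:ℂ)^2*(l₁ ε + l₂ ε) + ε) * hQ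
    have keyR : (T ε)^3 + 2*(T ε)^2 + (T ε) + 3*k^2*ε^2*(T ε) + (4/3)*k^2*ε^2 = 0 := by
      have hcast : (((T ε)^3 + 2*(T ε)^2 + (T ε) + 3*k^2*ε^2*(T ε) + (4/3)*k^2*ε^2 : ℝ) : ℂ)
          = 0 := by push_cast; linear_combination keyC
      exact_mod_cast hcast
    exact ⟨hts, keyR⟩
  -- Bound: |T ε| ≤ (108/25) k² ε² for ε > 0
  have hbound : ∀ ε : ℝ, 0 < ε → |T ε| ≤ (108/25) * k^2 * ε^2 := by
    intro ε hε
    have key := (main ε hε).2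
    have hke : (0:ℝ) < k^2 * ε^2 := by positivity
    -- key rewrites as T((1+T)² + 3k²ε²) = -(4/3)k²ε², so T ≤ 0
    have hTneg : T ε ≤ 0 := by
      nlinarith [sq_nonneg (1 + T ε), sq_nonneg (T ε), hke]
    have hT1 : -(4/9) ≤ T ε := by
      nlinarith [sq_nonneg (1 + T ε), mul_nonpos_of_nonpos_of_nonneg hTneg (sq_nonneg (1 + T ε))]
    have hT2 : -((108/25) * k^2 * ε^2) ≤ T ε := by
      nlinarith [sq_nonneg (1 + T ε), hke, mul_nonpos_of_nonpos_of_nonneg hTneg (sq_nonneg (1 + T ε))]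
    rw [abs_le]
    constructor
    · exact hT2
    · nlinarith
  -- T → 0 along the filter
  have hTlim : Filter.Tendsto T (nhdsWithin 0 (Set.Ioi 0)) (nhds 0) := by
    refine squeeze_zero_norm' (a := fun ε => (108/25) * k^2 * ε^2) ?_ ?_
    · filter_upwards [self_mem_nhdsWithin] with ε hε
      simpa [Real.norm_eq_abs] using hbound ε hε
    · have : Filter.Tendsto (fun ε : ℝ => (108/25) * k^2 * ε^2) (nhds 0)
          (nhds ((108/25) * k^2 * 0^2)) := by
        exact (continuous_const.mul ((continuous_pow 2))).tendsto 0
      simpa using this.mono_left nhdsWithin_le_nhds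
  -- The denominator as a real function of T and ε
  have hDlim : Filter.Tendsto (fun ε : ℝ => ((3 + 6*(T ε) + 3*(T ε)^2 + 5*k^2*ε^2 : ℝ) : ℂ))
      (nhdsWithin 0 (Set.Ioi 0)) (nhds (3 : ℂ)) := by
    have hR : Filter.Tendsto (fun ε : ℝ => (3 + 6*(T ε) + 3*(T ε)^2 + 5*k^2*ε^2 : ℝ))
        (nhdsWithin 0 (Set.Ioi 0)) (nhds (3 : ℝ)) := by
      have h1 : Filter.Tendsto (fun ε : ℝ => (5*k^2*ε^2 : ℝ)) (nhdsWithin 0 (Set.Ioi 0))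
          (nhds 0) := by
        have : Filter.Tendsto (fun ε : ℝ => (5*k^2*ε^2 : ℝ)) (nhds 0) (nhds (5*k^2*0^2)) :=
          (continuous_const.mul (continuous_pow 2)).tendsto 0
        simpa using this.mono_left nhdsWithin_le_nhds
      have h2 := ((hTlim.const_mul 6).const_add 3).add
        (((hTlim.pow 2).const_mul 3).add h1)
      simpa using h2.congr (fun ε => by ring)
    have h3 := (Complex.continuous_ofReal.tendsto (3:ℝ)).comp hR
    rw [show (((3:ℝ)):ℂ) = 3 by norm_num] at h3
    exact h3
  have hlim : Filter.Tendsto (fun ε : ℝ =>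
      -4 / ((3 + 6*(T ε) + 3*(T ε)^2 + 5*k^2*ε^2 : ℝ) : ℂ))
      (nhdsWithin 0 (Set.Ioi 0)) (nhds (-4/3 : ℂ)) :=
    Filter.Tendsto.div tendsto_const_nhds hDlim (by norm_num)
  -- Conclude by eventual equality
  apply hlim.congr'
  filter_upwards [self_mem_nhdsWithin] with ε hε
  have hε : (0:ℝ) < ε := hε
  have hεC : (ε : ℂ) ≠ 0 := by exact_mod_cast hε.ne'
  obtain ⟨hts, -⟩ := main ε hε
  -- relation εp in terms of t, from hQ; re-derive hQ facts: we instead show denominators equal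
  have hεC2 : (ε : ℂ)^2 ≠ 0 := pow_ne_zero 2 hεC
  -- reprove hQ here (needed for the denominator identity)
  have hE1 : (ε:ℂ) * (l₁ ε)^3 + (l₁ ε)^2 + 3*k^2*ε*(l₁ ε) + (5/3)*k^2 = 0 := by
    have h := hroot₁ ε hε
    unfold gradP at h
    field_simp at h
    have h3 : (3*(ε:ℂ)) * ((ε:ℂ) * (l₁ ε)^3 + (l₁ ε)^2 + 3*k^2*ε*(l₁ ε) + (5/3)*k^2) = 0 := by
      linear_combination (-(ε:ℂ)) * h
    exact (mul_eq_zero.mp h3).resolve_left (by simpa using hεC)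
  have hE2 : (ε:ℂ) * (l₂ ε)^3 + (l₂ ε)^2 + 3*k^2*ε*(l₂ ε) + (5/3)*k^2 = 0 := by
    have h := hroot₂ ε hε
    unfold gradP at h
    field_simp at h
    have h3 : (3*(ε:ℂ)) * ((ε:ℂ) * (l₂ ε)^3 + (l₂ ε)^2 + 3*k^2*ε*(l₂ ε) + (5/3)*k^2) = 0 := by
      linear_combination (-(ε:ℂ)) * h
    exact (mul_eq_zero.mp h3).resolve_left (by simpa using hεC)
  have hd : l₁ ε - l₂ ε ≠ 0 := by
    rw [hconj ε hε]
    intro h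
    apply hnonreal ε hε
    have him : (l₁ ε - starRingEnd ℂ (l₁ ε)).im = 0 := by rw [h]; simp
    simpa [Complex.sub_im, Complex.conj_im] using him
  have hQ : (ε:ℂ) * ((l₁ ε)^2 + (l₁ ε)*(l₂ ε) + (l₂ ε)^2) + (l₁ ε + l₂ ε) + 3*k^2*ε = 0 := by
    have hfac : (l₁ ε - l₂ ε) *
        ((ε:ℂ) * ((l₁ ε)^2 + (l₁ ε)*(l₂ ε) + (l₂ ε)^2) + (l₁ ε + l₂ ε) + 3*k^2*ε) = 0 := by
      linear_combination hE1 - hE2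
    rcases mul_eq_zero.mp hfac with h | h
    · exact absurd h hd
    · exact h
  -- denominator identity
  have hD : (3 + 3 * (ε:ℂ) * (l₁ ε + l₂ ε) + (ε:ℂ)^2 * (3 * (l₁ ε) * (l₂ ε) - 4 * k^2))
      = ((3 + 6*(T ε) + 3*(T ε)^2 + 5*k^2*ε^2 : ℝ) : ℂ) := by
    push_cast
    rw [hts]
    linear_combination (-3*(ε:ℂ)) * hQ
  unfold gradB
  rw [hD]
  symm
  set D : ℂ := ((3 + 6*(T ε) + 3*(T ε)^2 + 5*k^2*ε^2 : ℝ) : ℂ)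
  rcases eq_or_ne D 0 with h0 | h0
  · simp [h0]
  · field_simp
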